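/- Assume A(iω) is invertible for every ω ∈ ℝ. Let ξ > 0 be such that D_ξ := DᵀD − ξ²I is invertible and such that the operator norm ‖G(iω)‖ (as a linear map from ℂ^{n_u} to ℂ^{n_y} with Euclidean norms, i.e. the largest singular value of G(iω)) satisfies ‖G(iω)‖ < ξ for all ω ∈ ℝ. Then det H_ξ(iω) ≠ 0 for every ω ∈ ℝ; i.e. H_ξ has no roots on the imaginary axis when the level ξ exceeds the H∞ norm of G. -/

import Mathlib

open Matrix Complex

noncomputable section

variable {n nu ny m : ℕ}

/-- `D_ξ = Dᵀ D − ξ² I`. -/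
def Dxi (D : Matrix (Fin ny) (Fin nu) ℝ) (ξ : ℝ) : Matrix (Fin nu) (Fin nu) ℝ :=
  Dᵀ * D - ξ ^ 2 • (1 : Matrix (Fin nu) (Fin nu) ℝ)

/-- `(Dᵀ)_ξ = D Dᵀ − ξ² I`, the matrix denoted `D_ξ^{-T}`-inverse base in the paper
(the only dimensionally consistent reading of the `(2,1)` block of `M₀`).
Note that it is invertible iff `D_ξ` is (for `ξ ≠ 0`), since `DᵀD` and `DDᵀ` have the
same nonzero eigenvalues. -/
def DxiT (D : Matrix (Fin ny) (Fin nu) ℝ) (ξ : ℝ) : Matrix (Fin ny) (Fin ny) ℝ :=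
  D * Dᵀ - ξ ^ 2 • (1 : Matrix (Fin ny) (Fin ny) ℝ)

/-- The block matrix `M₀`. -/
def Mzero (A0 : Matrix (Fin n) (Fin n) ℝ) (B : Matrix (Fin n) (Fin nu) ℝ)
    (C : Matrix (Fin ny) (Fin n) ℝ) (D : Matrix (Fin ny) (Fin nu) ℝ) (ξ : ℝ) :
    Matrix (Fin n ⊕ Fin n) (Fin n ⊕ Fin n) ℝ :=
  fromBlocks (A0 - B * (Dxi D ξ)⁻¹ * Dᵀ * C) (-(B * (Dxi D ξ)⁻¹ * Bᵀ))
    (ξ ^ 2 • (Cᵀ * (DxiT D ξ)⁻¹ * C)) (-A0ᵀ + Cᵀ * D * (Dxi D ξ)⁻¹ * Bᵀ)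

/-- The block matrix `Mᵢ` for `1 ≤ i ≤ m`. -/
def Mpos (Ai : Matrix (Fin n) (Fin n) ℝ) : Matrix (Fin n ⊕ Fin n) (Fin n ⊕ Fin n) ℝ :=
  fromBlocks Ai 0 0 0

/-- The block matrix `M₋ᵢ` for `1 ≤ i ≤ m`. -/
def Mneg (Ai : Matrix (Fin n) (Fin n) ℝ) : Matrix (Fin n ⊕ Fin n) (Fin n ⊕ Fin n) ℝ :=
  fromBlocks 0 0 0 (-Aiᵀ)

/-- `H_ξ(λ) = λI − M₀ − Σᵢ (Mᵢ e^{−λτᵢ} + M₋ᵢ e^{λτᵢ})`. -/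
def Hxi (A0 : Matrix (Fin n) (Fin n) ℝ) (A : Fin m → Matrix (Fin n) (Fin n) ℝ)
    (B : Matrix (Fin n) (Fin nu) ℝ) (C : Matrix (Fin ny) (Fin n) ℝ)
    (D : Matrix (Fin ny) (Fin nu) ℝ) (τ : Fin m → ℝ) (ξ : ℝ) (lam : ℂ) :
    Matrix (Fin n ⊕ Fin n) (Fin n ⊕ Fin n) ℂ :=
  lam • (1 : Matrix (Fin n ⊕ Fin n) (Fin n ⊕ Fin n) ℂ)
    - (Mzero A0 B C D ξ).map Complex.ofReal
    - ∑ i : Fin m, (Complex.exp (-lam * (τ i : ℂ)) • (Mpos (A i)).map Complex.ofReal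
        + Complex.exp (lam * (τ i : ℂ)) • (Mneg (A i)).map Complex.ofReal)

/-- `A(λ) = λI − A₀ − Σᵢ Aᵢ e^{−λτᵢ}`. -/
def Amat (A0 : Matrix (Fin n) (Fin n) ℝ) (A : Fin m → Matrix (Fin n) (Fin n) ℝ)
    (τ : Fin m → ℝ) (lam : ℂ) : Matrix (Fin n) (Fin n) ℂ :=
  lam • (1 : Matrix (Fin n) (Fin n) ℂ) - A0.map Complex.ofReal
    - ∑ i : Fin m, Complex.exp (-lam * (τ i : ℂ)) • (A i).map Complex.ofReal

/-- The transfer function `G(λ) = C A(λ)⁻¹ B + D`. -/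
def Gmat (A0 : Matrix (Fin n) (Fin n) ℝ) (A : Fin m → Matrix (Fin n) (Fin n) ℝ)
    (B : Matrix (Fin n) (Fin nu) ℝ) (C : Matrix (Fin ny) (Fin n) ℝ)
    (D : Matrix (Fin ny) (Fin nu) ℝ) (τ : Fin m → ℝ) (lam : ℂ) :
    Matrix (Fin ny) (Fin nu) ℂ :=
  C.map Complex.ofReal * (Amat A0 A τ lam)⁻¹ * B.map Complex.ofReal + D.map Complex.ofReal

/-- `τ_max`, the maximum of the delays. -/
def tauMax [NeZero m] (τ : Fin m → ℝ) : ℝ :=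
  Finset.univ.sup' Finset.univ_nonempty τ

/-- `λ` is an eigenvalue of the infinite-dimensional operator `L_ξ`: there is a continuously
differentiable, not identically zero function `u : [−τ_max, τ_max] → ℂ^{2n}` with
`u′(t) = λ u(t)` on the interval and `u′(0) = M₀ u(0) + Σᵢ (Mᵢ u(−τᵢ) + M₋ᵢ u(τᵢ))`. -/
def IsEigLxi [NeZero m] (A0 : Matrix (Fin n) (Fin n) ℝ) (A : Fin m → Matrix (Fin n) (Fin n) ℝ)
    (B : Matrix (Fin n) (Fin nu) ℝ) (C : Matrix (Fin ny) (Fin n) ℝ)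
    (D : Matrix (Fin ny) (Fin nu) ℝ) (τ : Fin m → ℝ) (ξ : ℝ) (lam : ℂ) : Prop :=
  ∃ u : ℝ → (Fin n ⊕ Fin n → ℂ),
    (∀ t ∈ Set.Icc (-(tauMax τ)) (tauMax τ),
      HasDerivWithinAt u (lam • u t) (Set.Icc (-(tauMax τ)) (tauMax τ)) t) ∧
    (∃ t ∈ Set.Icc (-(tauMax τ)) (tauMax τ), u t ≠ 0) ∧
    lam • u 0 = (Mzero A0 B C D ξ).map Complex.ofReal *ᵥ u 0
      + ∑ i : Fin m, ((Mpos (A i)).map Complex.ofReal *ᵥ u (-(τ i))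
          + (Mneg (A i)).map Complex.ofReal *ᵥ u (τ i))


/-- The operator norm of a complex matrix, viewed as a linear map between Euclidean spaces
(i.e. its largest singular value). -/
def l2OpNorm {a b : ℕ} (M : Matrix (Fin a) (Fin b) ℂ) : ℝ :=
  ‖LinearMap.toContinuousLinearMap (Matrix.toEuclideanLin M)‖

/-!
If `H_ξ(iω) (x, y) = 0`, put `u := -D_ξ⁻¹ (Dᵀ C x + Bᵀ y)`. The two block rows of `H_ξ(iω)` say
`A(iω) x = B u` and `A(iω)ᴴ y = Cᵀ (C x + D u)`, so `C x + D u = G(iω) u`, and substituting this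
into the definition of `u` gives `G(iω)ᴴ G(iω) u = ξ² u`, i.e. `‖G(iω) u‖ = ξ ‖u‖`. Since
`‖G(iω)‖ < ξ`, this forces `u = 0`, and then `x = 0` and `y = 0` because `A(iω)` is invertible.
Matching the `(2,1)` block of `M₀` uses the push-through identity
`ξ² (D Dᵀ - ξ²)⁻¹ = D (Dᵀ D - ξ²)⁻¹ Dᵀ - 1`.
-/

namespace Matrix

variable {ι κ ρ σ α : Type*}

theorem fromBlocks_sub [Sub α] (A : Matrix ι ρ α) (B : Matrix ι σ α) (C : Matrix κ ρ α)
    (D : Matrix κ σ α) (A' : Matrix ι ρ α) (B' : Matrix ι σ α) (C' : Matrix κ ρ α)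
    (D' : Matrix κ σ α) : fromBlocks A B C D - fromBlocks A' B' C' D' =
      fromBlocks (A - A') (B - B') (C - C') (D - D') := by
  ext (i | i) (j | j) <;> rfl

theorem fromBlocks_sum {β : Type*} [AddCommMonoid α] (s : Finset β) (A : β → Matrix ι ρ α)
    (B : β → Matrix ι σ α) (C : β → Matrix κ ρ α) (D : β → Matrix κ σ α) :
    ∑ b ∈ s, fromBlocks (A b) (B b) (C b) (D b) =
      fromBlocks (∑ b ∈ s, A b) (∑ b ∈ s, B b) (∑ b ∈ s, C b) (∑ b ∈ s, D b) := by
  ext (i | i) (j | j) <;> simp [Matrix.sum_apply]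

theorem smul_inv_mul_sub_smul_one {K : Type*} [Field K] [Fintype ι] [DecidableEq ι]
    [Fintype κ] [DecidableEq κ] (P : Matrix ι κ K) (Q : Matrix κ ι K) {c : K} (hc : c ≠ 0)
    (h : IsUnit (Q * P - c • 1)) :
    c • (P * Q - c • 1)⁻¹ = P * (Q * P - c • 1)⁻¹ * Q - 1 := by
  have hPQ : (P * Q - c • 1) * (P * (Q * P - c • 1)⁻¹ * Q - 1) = c • 1 := by
    have hcomm : (P * Q - c • 1) * P = P * (Q * P - c • 1) := by
      simp only [Matrix.sub_mul, Matrix.mul_sub, Matrix.mul_assoc, Matrix.smul_mul,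
        Matrix.mul_smul, Matrix.one_mul, Matrix.mul_one]
    rw [Matrix.mul_sub, ← Matrix.mul_assoc, ← Matrix.mul_assoc, hcomm, Matrix.mul_assoc P,
      Matrix.mul_nonsing_inv _ ((isUnit_iff_isUnit_det _).1 h), Matrix.mul_one, Matrix.mul_one]
    abel
  have hinv : (P * Q - c • 1)⁻¹ = c⁻¹ • (P * (Q * P - c • 1)⁻¹ * Q - 1) :=
    inv_eq_right_inv (by rw [Matrix.mul_smul, hPQ, smul_smul, inv_mul_cancel₀ hc, one_smul])
  rw [hinv, smul_smul, mul_inv_cancel₀ hc, one_smul]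

theorem map_ofReal_mul [Fintype κ] (M : Matrix ι κ ℝ) (N : Matrix κ ρ ℝ) :
    (M * N).map ofReal = M.map ofReal * N.map ofReal :=
  Matrix.map_mul (f := ofRealHom)

theorem conjTranspose_map_ofReal (M : Matrix ι κ ℝ) : (M.map ofReal)ᴴ = Mᵀ.map ofReal := by
  rw [← conjTranspose_eq_transpose_of_trivial,
    conjTranspose_map _ fun x => (Complex.conj_ofReal x).symm]

theorem map_ofReal_nonsing_inv [Fintype κ] [DecidableEq κ] {M : Matrix κ κ ℝ} (hM : IsUnit M) :
    M⁻¹.map ofReal = (M.map ofReal)⁻¹ := by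
  refine (inv_eq_right_inv ?_).symm
  rw [← map_ofReal_mul, mul_nonsing_inv _ ((isUnit_iff_isUnit_det _).1 hM)]
  exact Matrix.map_one _ ofReal_zero ofReal_one

end Matrix

theorem eq_zero_of_conjTranspose_mul_self_mulVec_eq {a b : ℕ} {G : Matrix (Fin a) (Fin b) ℂ}
    {ξ : ℝ} (hG : l2OpNorm G < ξ) {u : Fin b → ℂ} (hu : (Gᴴ * G) *ᵥ u = (ξ : ℂ) ^ 2 • u) :
    u = 0 := by
  set T := LinearMap.toContinuousLinearMap (toEuclideanLin G)
  set U : EuclideanSpace ℂ (Fin b) := WithLp.toLp 2 u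
  have hTU : ‖T U‖ ^ 2 = ξ ^ 2 * ‖U‖ ^ 2 := by
    have : inner ℂ (T U) (T U) = inner ℂ U (((ξ : ℂ) ^ 2) • U) := by
      rw [LinearMap.coe_toContinuousLinearMap', ← LinearMap.adjoint_inner_right,
        ← toEuclideanLin_conjTranspose_eq_adjoint, toLpLin_apply, toLpLin_apply,
        WithLp.ofLp_toLp, mulVec_mulVec, hu, WithLp.toLp_smul]
    rw [inner_self_eq_norm_sq_to_K, inner_smul_right, inner_self_eq_norm_sq_to_K] at this
    exact RCLike.ofReal_injective (K := ℂ) (by push_cast; exact this)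
  by_contra hu0
  have hU : 0 < ‖U‖ := norm_pos_iff.2 fun h => hu0 (by simpa [U] using congrArg WithLp.ofLp h)
  have hlt : ‖T U‖ < ξ * ‖U‖ := (T.le_opNorm U).trans_lt (mul_lt_mul_of_pos_right hG hU)
  nlinarith [norm_nonneg (T U)]

section Hamiltonian

variable {ι κ μ : Type*} [Fintype ι] [Fintype κ] [DecidableEq κ] [Fintype μ]
  {𝔸 : Matrix ι ι ℂ} {B : Matrix ι κ ℂ} {C : Matrix μ ι ℂ} {D : Matrix μ κ ℂ} {c : ℂ}

variable (𝔸 B C D c) in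
def hamiltonian : Matrix (ι ⊕ ι) (ι ⊕ ι) ℂ :=
  fromBlocks (𝔸 + B * (Dᴴ * D - c • 1)⁻¹ * Dᴴ * C) (B * (Dᴴ * D - c • 1)⁻¹ * Bᴴ)
    (Cᴴ * C - Cᴴ * D * (Dᴴ * D - c • 1)⁻¹ * Dᴴ * C) (-𝔸ᴴ - Cᴴ * D * (Dᴴ * D - c • 1)⁻¹ * Bᴴ)

theorem hamiltonian_mulVec_sum_elim {x y : ι → ℂ} {u : κ → ℂ}
    (hu : u = -((Dᴴ * D - c • 1)⁻¹ *ᵥ (Dᴴ *ᵥ (C *ᵥ x) + Bᴴ *ᵥ y))) :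
    hamiltonian 𝔸 B C D c *ᵥ Sum.elim x y =
      Sum.elim (𝔸 *ᵥ x - B *ᵥ u) (Cᴴ *ᵥ (C *ᵥ x + D *ᵥ u) - 𝔸ᴴ *ᵥ y) := by
  subst hu
  rw [hamiltonian, fromBlocks_mulVec]
  congr 1
  all_goals
    simp only [Sum.elim_comp_inl, Sum.elim_comp_inr, add_mulVec, sub_mulVec, neg_mulVec,
      mulVec_neg, mulVec_add, ← mulVec_mulVec]
    abel

theorem conjTranspose_mul_self_mulVec_eq_smul [DecidableEq ι] (h𝔸 : IsUnit 𝔸) {x y : ι → ℂ}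
    {u : κ → ℂ} (hx : 𝔸 *ᵥ x = B *ᵥ u) (hy : 𝔸ᴴ *ᵥ y = Cᴴ *ᵥ (C *ᵥ x + D *ᵥ u))
    (hu : (Dᴴ * D - c • 1) *ᵥ u = -(Dᴴ *ᵥ (C *ᵥ x) + Bᴴ *ᵥ y)) :
    ((C * 𝔸⁻¹ * B + D)ᴴ * (C * 𝔸⁻¹ * B + D)) *ᵥ u = c • u := by
  have hGu : (C * 𝔸⁻¹ * B + D) *ᵥ u = C *ᵥ x + D *ᵥ u := by
    simp only [add_mulVec, ← mulVec_mulVec]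
    rw [← hx, mulVec_mulVec x 𝔸⁻¹, nonsing_inv_mul _ ((isUnit_iff_isUnit_det _).1 h𝔸), one_mulVec]
  have hy' : y = 𝔸ᴴ⁻¹ *ᵥ (Cᴴ *ᵥ (C *ᵥ x + D *ᵥ u)) := by
    rw [← hy, mulVec_mulVec, nonsing_inv_mul _ ((isUnit_iff_isUnit_det _).1
      ((isUnit_conjTranspose 𝔸).2 h𝔸)), one_mulVec]
  rw [← mulVec_mulVec, hGu, conjTranspose_add, conjTranspose_mul, conjTranspose_mul,
    conjTranspose_nonsing_inv, add_mulVec, ← mulVec_mulVec, ← mulVec_mulVec, ← hy']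
  simp only [sub_mulVec, smul_mulVec, one_mulVec, ← mulVec_mulVec, mulVec_add] at hu ⊢
  linear_combination (norm := abel) hu

theorem exists_eigenvector_of_hamiltonian_mulVec_eq_zero
    [DecidableEq ι] (h𝔸 : IsUnit 𝔸) (hD : IsUnit (Dᴴ * D - c • 1)) {v : ι ⊕ ι → ℂ} (hv : v ≠ 0)
    (hHv : hamiltonian 𝔸 B C D c *ᵥ v = 0) :
    ∃ u ≠ 0, ((C * 𝔸⁻¹ * B + D)ᴴ * (C * 𝔸⁻¹ * B + D)) *ᵥ u = c • u := by
  set x := v ∘ Sum.inl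
  set y := v ∘ Sum.inr
  set u := -((Dᴴ * D - c • 1)⁻¹ *ᵥ (Dᴴ *ᵥ (C *ᵥ x) + Bᴴ *ᵥ y)) with hu
  rw [← Sum.elim_comp_inl_inr v, hamiltonian_mulVec_sum_elim hu, ← Sum.elim_zero_zero,
    Sum.elim_eq_iff, sub_eq_zero, sub_eq_zero] at hHv
  obtain ⟨hx, hy⟩ := hHv
  have hDu : (Dᴴ * D - c • 1) *ᵥ u = -(Dᴴ *ᵥ (C *ᵥ x) + Bᴴ *ᵥ y) := by
    rw [hu, mulVec_neg, mulVec_mulVec, mul_nonsing_inv _ ((isUnit_iff_isUnit_det _).1 hD),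
      one_mulVec]
  refine ⟨u, fun hu0 => hv ?_, conjTranspose_mul_self_mulVec_eq_smul h𝔸 hx hy.symm hDu⟩
  have hx0 : x = 0 := mulVec_injective_of_isUnit h𝔸 (by rw [hx, hu0, mulVec_zero, mulVec_zero])
  have hy0 : y = 0 := mulVec_injective_of_isUnit ((isUnit_conjTranspose 𝔸).2 h𝔸)
    (by rw [← hy, hx0, hu0]; simp)
  rw [← Sum.elim_comp_inl_inr v, ← Sum.elim_zero_zero]
  exact congrArg₂ _ hx0 hy0

end Hamiltonian

theorem map_ofReal_Dxi (D : Matrix (Fin ny) (Fin nu) ℝ) (ξ : ℝ) :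
    (Dxi D ξ).map ofReal = (D.map ofReal)ᴴ * D.map ofReal - (ξ : ℂ) ^ 2 • 1 := by
  rw [Dxi, Matrix.map_sub _ ofReal_sub, map_ofReal_mul, ← conjTranspose_map_ofReal,
    Matrix.map_smul _ _ (ofReal_mul _), Matrix.map_one _ ofReal_zero ofReal_one, ← ofReal_pow,
    Complex.coe_smul]

theorem conjTranspose_Amat_I_mul (A0 : Matrix (Fin n) (Fin n) ℝ)
    (A : Fin m → Matrix (Fin n) (Fin n) ℝ) (τ : Fin m → ℝ) (ω : ℝ) :
    (Amat A0 A τ (I * ω))ᴴ = -((I * ω) • 1) - (A0.map ofReal)ᴴ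
      - ∑ i, exp (I * ω * τ i) • (A i |>.map ofReal)ᴴ := by
  simp only [Amat, conjTranspose_sub, conjTranspose_smul, conjTranspose_one, conjTranspose_sum,
    star_mul', Complex.star_def, ← exp_conj, map_mul, map_neg, conj_I,
    conj_ofReal, neg_mul, neg_neg, neg_smul]

theorem Hxi_I_mul_eq_hamiltonian (A0 : Matrix (Fin n) (Fin n) ℝ)
    (A : Fin m → Matrix (Fin n) (Fin n) ℝ) (B : Matrix (Fin n) (Fin nu) ℝ)
    (C : Matrix (Fin ny) (Fin n) ℝ) (D : Matrix (Fin ny) (Fin nu) ℝ) (τ : Fin m → ℝ) {ξ : ℝ}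
    (hξ : ξ ≠ 0) (hD : IsUnit (Dxi D ξ)) (ω : ℝ) :
    Hxi A0 A B C D τ ξ (I * ω) = hamiltonian (Amat A0 A τ (I * ω)) (B.map ofReal)
      (C.map ofReal) (D.map ofReal) ((ξ : ℂ) ^ 2) := by
  have h21 : ξ ^ 2 • (Cᵀ * (DxiT D ξ)⁻¹ * C) = Cᵀ * D * (Dxi D ξ)⁻¹ * Dᵀ * C - Cᵀ * C := by
    rw [← Matrix.smul_mul, ← Matrix.mul_smul, DxiT,
      smul_inv_mul_sub_smul_one D Dᵀ (pow_ne_zero 2 hξ) hD]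
    simp only [Matrix.mul_sub, Matrix.sub_mul, Matrix.mul_one, Matrix.mul_assoc]
    rfl
  have hQ : (Dxi D ξ)⁻¹.map ofReal = ((D.map ofReal)ᴴ * D.map ofReal - (ξ : ℂ) ^ 2 • 1)⁻¹ := by
    rw [map_ofReal_nonsing_inv hD, map_ofReal_Dxi]
  have hsum : ∑ i, (exp (-(I * ω) * τ i) • (Mpos (A i)).map ofReal
      + exp (I * ω * τ i) • (Mneg (A i)).map ofReal) = fromBlocks
        (∑ i, exp (-(I * ω) * τ i) • (A i).map ofReal) 0 0
        (-∑ i, exp (I * ω * τ i) • ((A i).map ofReal)ᴴ) := by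
    simp only [Mpos, Mneg, fromBlocks_map, fromBlocks_smul, fromBlocks_add, fromBlocks_sum,
      Matrix.map_zero _ ofReal_zero, Matrix.map_neg _ ofReal_neg, ← conjTranspose_map_ofReal,
      smul_zero, add_zero, zero_add, smul_neg, Finset.sum_neg_distrib, Finset.sum_const_zero]
  rw [Hxi, Mzero, h21, fromBlocks_map, hsum, ← fromBlocks_one, fromBlocks_smul, fromBlocks_sub,
    fromBlocks_sub, hamiltonian]
  simp only [Matrix.map_sub _ ofReal_sub, Matrix.map_neg _ ofReal_neg, Matrix.map_add _ ofReal_add,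
    map_ofReal_mul, hQ, ← conjTranspose_map_ofReal, conjTranspose_Amat_I_mul]
  congr 1
  · rw [Amat]
    abel
  · simp only [smul_zero, zero_sub, sub_zero, neg_neg]
  · simp only [smul_zero, zero_sub, sub_zero, neg_sub]
  · abel

theorem det_Hxi_ne_zero_of_lt_general
    (A0 : Matrix (Fin n) (Fin n) ℝ) (A : Fin m → Matrix (Fin n) (Fin n) ℝ)
    (B : Matrix (Fin n) (Fin nu) ℝ) (C : Matrix (Fin ny) (Fin n) ℝ)
    (D : Matrix (Fin ny) (Fin nu) ℝ) (τ : Fin m → ℝ)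
    (hA : ∀ ω : ℝ, IsUnit (Amat A0 A τ (Complex.I * ω)))
    (ξ : ℝ) (hξ : 0 < ξ) (hD : IsUnit (Dxi D ξ))
    (hlt : ∀ ω : ℝ, l2OpNorm (Gmat A0 A B C D τ (Complex.I * ω)) < ξ) :
    ∀ ω : ℝ, (Hxi A0 A B C D τ ξ (Complex.I * ω)).det ≠ 0 := by
  intro ω hdet
  obtain ⟨v, hv, hHv⟩ := exists_mulVec_eq_zero_iff.2 hdet
  rw [Hxi_I_mul_eq_hamiltonian A0 A B C D τ hξ.ne' hD ω] at hHv
  have hDc : IsUnit ((D.map ofReal)ᴴ * D.map ofReal - (ξ : ℂ) ^ 2 • 1) :=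
    map_ofReal_Dxi D ξ ▸ hD.map ofRealHom.mapMatrix
  obtain ⟨u, hu0, hu⟩ := exists_eigenvector_of_hamiltonian_mulVec_eq_zero (hA ω) hDc hv hHv
  exact hu0 (eq_zero_of_conjTranspose_mul_self_mulVec_eq (hlt ω) hu)

/-- if `‖G(iω)‖ < ξ` for all `ω ∈ ℝ`, then `det H_ξ(iω) ≠ 0` for all `ω`. -/
theorem det_Hxi_ne_zero_of_lt [NeZero n] [NeZero nu] [NeZero ny] [NeZero m]
    (A0 : Matrix (Fin n) (Fin n) ℝ) (A : Fin m → Matrix (Fin n) (Fin n) ℝ)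
    (B : Matrix (Fin n) (Fin nu) ℝ) (C : Matrix (Fin ny) (Fin n) ℝ)
    (D : Matrix (Fin ny) (Fin nu) ℝ) (τ : Fin m → ℝ) (hτ : ∀ i, 0 ≤ τ i)
    (hA : ∀ ω : ℝ, IsUnit (Amat A0 A τ (Complex.I * ω)))
    (ξ : ℝ) (hξ : 0 < ξ) (hD : IsUnit (Dxi D ξ))
    (hlt : ∀ ω : ℝ, l2OpNorm (Gmat A0 A B C D τ (Complex.I * ω)) < ξ) :
    ∀ ω : ℝ, (Hxi A0 A B C D τ ξ (Complex.I * ω)).det ≠ 0 :=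
  det_Hxi_ne_zero_of_lt_general A0 A B C D τ hA ξ hξ hD hlt
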